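/- Let λ > 0, Δ > 0, α = e^{−λΔ}, w̄, J ≥ 0, K ≥ 1, and let (η_k) satisfy η_{k+1} ≤ α η_k + (w̄/λ)(1−α) + J with η_k ≥ 0. Then with η_∞ := w̄/λ + J/(1−α), the time-averaged bound holds: (1/(KΔ)) Σ_{k=0}^{K−1} [Δ·(w̄/λ) + ((1−α)/λ)·max(η_k − w̄/λ, 0)] ≤ w̄/λ + J/(λΔ) + max(η_0 − η_∞, 0)/(K λ Δ). -/

import Mathlib

/-! With `α = exp (-λΔ) < 1`, the excess `ξ_k = (η_k - w̄/λ)₊` obeys the affine recursion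
`ξ_{k+1} ≤ α ξ_k + J`, whose fixed point is `J/(1-α)`. Hence `ξ_k ≤ J/(1-α) + α^k (ξ_0 - J/(1-α))₊`,
and summing the geometric series bounds `∑_{k<K} ξ_k` by `K J/(1-α) + (ξ_0 - J/(1-α))₊/(1-α)`.
The factor `(1-α)/λ` in front of `ξ_k` cancels the `1-α`, which gives the averaged bound. -/

open Finset

section AffineRecursion

variable {R : Type*} [Field R] [LinearOrder R] [IsStrictOrderedRing R]

theorem max_sub_zero_le_mul_add {α c J x y : R} (hα : 0 ≤ α) (hJ : 0 ≤ J)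
    (h : y ≤ α * x + c * (1 - α) + J) : max (y - c) 0 ≤ α * max (x - c) 0 + J := by
  have hx : α * (x - c) ≤ α * max (x - c) 0 := mul_le_mul_of_nonneg_left (le_max_left _ _) hα
  have hx0 : 0 ≤ α * max (x - c) 0 := mul_nonneg hα (le_max_right _ _)
  exact max_le (by linarith) (by linarith)

variable {α b : R} {ξ : ℕ → R}

theorem le_add_pow_mul_of_le_mul_add (hα : 0 ≤ α)
    (hrec : ∀ k, ξ (k + 1) ≤ α * ξ k + (1 - α) * b) (k : ℕ) :
    ξ k ≤ b + α ^ k * max (ξ 0 - b) 0 := by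
  induction k with
  | zero => rw [pow_zero, one_mul]; linarith [le_max_left (ξ 0 - b) 0]
  | succ k ih =>
    calc ξ (k + 1) ≤ α * ξ k + (1 - α) * b := hrec k
      _ ≤ α * (b + α ^ k * max (ξ 0 - b) 0) + (1 - α) * b := by gcongr
      _ = b + α ^ (k + 1) * max (ξ 0 - b) 0 := by ring

theorem sum_range_le_of_le_mul_add (hα₀ : 0 ≤ α) (hα₁ : α < 1)
    (hrec : ∀ k, ξ (k + 1) ≤ α * ξ k + (1 - α) * b) (K : ℕ) :
    ∑ k ∈ range K, ξ k ≤ K * b + max (ξ 0 - b) 0 / (1 - α) := by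
  have hgeom : ∑ k ∈ range K, α ^ k ≤ 1 / (1 - α) := by
    rw [range_eq_Ico]
    simpa only [pow_zero] using geom_sum_Ico_le_of_lt_one (m := 0) (n := K) hα₀ hα₁
  calc ∑ k ∈ range K, ξ k ≤ ∑ k ∈ range K, (b + α ^ k * max (ξ 0 - b) 0) :=
        sum_le_sum fun k _ => le_add_pow_mul_of_le_mul_add hα₀ hrec k
    _ = K * b + (∑ k ∈ range K, α ^ k) * max (ξ 0 - b) 0 := by
        rw [sum_add_distrib, sum_const, card_range, nsmul_eq_mul, sum_mul]
    _ ≤ K * b + 1 / (1 - α) * max (ξ 0 - b) 0 := by gcongr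
    _ = K * b + max (ξ 0 - b) 0 / (1 - α) := by ring

end AffineRecursion

theorem stmt19_general (lam Δ wbar J : ℝ) (hlam : 0 < lam) (hΔ : 0 < Δ)
    (hJ : 0 ≤ J) (K : ℕ) (hK : 1 ≤ K) (η : ℕ → ℝ)
    (hrec : ∀ k, η (k + 1) ≤ Real.exp (-lam * Δ) * η k +
      (wbar / lam) * (1 - Real.exp (-lam * Δ)) + J) :
    (1 / ((K : ℝ) * Δ)) * ∑ k ∈ Finset.range K,
        (Δ * (wbar / lam) +
          ((1 - Real.exp (-lam * Δ)) / lam) * max (η k - wbar / lam) 0) ≤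
      wbar / lam + J / (lam * Δ) +
        max (η 0 - (wbar / lam + J / (1 - Real.exp (-lam * Δ)))) 0 / ((K : ℝ) * lam * Δ) := by
  set α := Real.exp (-lam * Δ)
  set c := wbar / lam
  set b := J / (1 - α)
  have hα₁ : α < 1 := Real.exp_lt_one_iff.mpr (by nlinarith)
  have h1α : 0 < 1 - α := by linarith
  have hb : (1 - α) * b = J := mul_div_cancel₀ J h1α.ne'
  have hK₀ : (0 : ℝ) < K := by exact_mod_cast hK
  have hsum := sum_range_le_of_le_mul_add (ξ := fun k => max (η k - c) 0) (Real.exp_pos _).le hα₁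
    (fun k => hb ▸ max_sub_zero_le_mul_add (Real.exp_pos _).le hJ (hrec k)) K
  have hexcess : max (max (η 0 - c) 0 - b) 0 = max (η 0 - (c + b)) 0 := by
    rw [sub_add_eq_sub_sub, ← max_sub_sub_right, zero_sub,
      max_assoc, max_eq_right (by linarith [div_nonneg hJ h1α.le] : -b ≤ 0)]
  rw [hexcess] at hsum
  rw [sum_add_distrib, sum_const, card_range, nsmul_eq_mul, ← mul_sum]
  calc 1 / (K * Δ) * (K * (Δ * c) + (1 - α) / lam * ∑ k ∈ range K, max (η k - c) 0)
      ≤ 1 / (K * Δ) * (K * (Δ * c) + (1 - α) / lam *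
          (K * b + max (η 0 - (c + b)) 0 / (1 - α))) := by gcongr
    _ = c + J / (lam * Δ) + max (η 0 - (c + b)) 0 / (K * lam * Δ) := by
        rw [← hb]; field_simp; ring

/-- horizon-wide time-averaged bound. With `α = exp(-lam Δ)`,
`η_{k+1} ≤ α η_k + (w̄/lam)(1-α) + J`, and `η_∞ = w̄/lam + J/(1-α)`, the time average of
the per-interval integral bounds satisfies
`(1/(KΔ)) ∑_{k<K} [Δ (w̄/lam) + ((1-α)/lam)(η_k - w̄/lam)₊]
  ≤ w̄/lam + J/(lam Δ) + (η_0 - η_∞)₊ / (K lam Δ)`. -/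
theorem stmt19 (lam Δ wbar J : ℝ) (hlam : 0 < lam) (hΔ : 0 < Δ) (hw : 0 ≤ wbar)
    (hJ : 0 ≤ J) (K : ℕ) (hK : 1 ≤ K) (η : ℕ → ℝ) (hpos : ∀ k, 0 ≤ η k)
    (hrec : ∀ k, η (k + 1) ≤ Real.exp (-lam * Δ) * η k +
      (wbar / lam) * (1 - Real.exp (-lam * Δ)) + J) :
    (1 / ((K : ℝ) * Δ)) * ∑ k ∈ Finset.range K,
        (Δ * (wbar / lam) +
          ((1 - Real.exp (-lam * Δ)) / lam) * max (η k - wbar / lam) 0) ≤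
      wbar / lam + J / (lam * Δ) +
        max (η 0 - (wbar / lam + J / (1 - Real.exp (-lam * Δ)))) 0 / ((K : ℝ) * lam * Δ) :=
  stmt19_general lam Δ wbar J hlam hΔ hJ K hK η hrec
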